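/- Let h : H → K be an isomorphism between subgroups K ⊆ H of a group G such that there is z in the centralizer of K in H with z² ∉ K. Let F ⊆ P(G) be an h-invariant left-invariant ideal. If A ⊆ H belongs to τ^α(F) for some ordinal α, then h(A) ∪ z·h(A) belongs to τ^{α+1}(F). -/

import Mathlib

open Pointwise

/-- A family of subsets of `G` is left-invariant if it is closed under left translations. -/
def LeftInvariant {G : Type} [Group G] (F : Set (Set G)) : Prop :=
  ∀ A ∈ F, ∀ x : G, x • A ∈ F

/-- A family of subsets is lower if it is closed under taking subsets. -/
def Lower {G : Type} [Group G] (F : Set (Set G)) : Prop :=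
  ∀ A B : Set G, A ⊆ B → B ∈ F → A ∈ F

/-- The transfinite iterates `τ^α(F)`. -/
noncomputable def tauIter {G : Type} [Group G] (F : Set (Set G)) : Ordinal → Set (Set G) :=
  Ordinal.lt_wf.fix fun α ih =>
    if α = 0 then F
    else {A | ∀ x y : G, x ≠ y → ∃ β, ∃ h : β < α, x • A ∩ y • A ∈ ih β h}

/-- The image `h(A) ⊆ G` of a set `A ⊆ H` under an isomorphism `h : H → K`
between subgroups of `G`. -/
def hImg {G : Type} [Group G] {H K : Subgroup G} (e : H ≃* K) (A : Set G) : Set G :=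
  Subtype.val '' (⇑e '' (Subtype.val ⁻¹' A))

/-- `F` is `h`-invariant: for `A ⊆ H`, `A ∈ F` iff `h(A) ∈ F`. -/
def HInv {G : Type} [Group G] {H K : Subgroup G} (e : H ≃* K) (F : Set (Set G)) : Prop :=
  ∀ A : Set G, A ⊆ (H : Set G) → (A ∈ F ↔ hImg e A ∈ F)

open Set

/-!
Since `h` is an isomorphism onto `K` and `F` is `h`-invariant, induction on `α` gives
`h(A) ∈ τ^α(F)`, a set contained in `K`; and for `T ⊆ K`, the sets `T` and `sT` are disjoint
unless `s ∈ K`. For `S = T ∪ zT` the set `S ∩ wS` splits into `T ∩ wT`, `T ∩ wzT`,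
`z(T ∩ z⁻¹wT)` and `z(T ∩ z⁻¹wzT)`. As `z` centralizes `K` and `z, z² ∉ K`, at most one
of `w`, `wz`, `z⁻¹w` lies in `K`, and `z⁻¹wz ∈ K` iff `w ∈ K`. So either
`w ∈ K` and `S ∩ wS = T' ∪ zT'` with `T' = T ∩ wT` of smaller rank, or at most one piece
survives and it lies in `T` or in `zT`; induction on the rank of `T` concludes.
-/

section Iterates

variable {G : Type} [Group G] {F : Set (Set G)}

@[simp]
theorem tauIter_zero : tauIter F 0 = F := by
  rw [tauIter, Ordinal.lt_wf.fix_eq, if_pos rfl]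

theorem mem_tauIter_of_ne_zero {α : Ordinal} (hα : α ≠ 0) {A : Set G} :
    A ∈ tauIter F α ↔ ∀ x y : G, x ≠ y → ∃ β, ∃ _ : β < α, x • A ∩ y • A ∈ tauIter F β := by
  rw [tauIter, Ordinal.lt_wf.fix_eq, if_neg hα]
  rfl

theorem smul_mem_tauIter (hli : LeftInvariant F) {α : Ordinal} {A : Set G}
    (hA : A ∈ tauIter F α) (g : G) : g • A ∈ tauIter F α := by
  rcases eq_or_ne α 0 with rfl | hα
  · rw [tauIter_zero] at hA ⊢
    exact hli A hA g
  rw [mem_tauIter_of_ne_zero hα] at hA ⊢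
  intro x y hxy
  obtain ⟨β, hβ, h⟩ := hA (x * g) (y * g) (mt mul_right_cancel hxy)
  exact ⟨β, hβ, by rwa [smul_smul, smul_smul]⟩

theorem mem_tauIter_of_subset (hlo : Lower F) {α : Ordinal} {A B : Set G} (hAB : A ⊆ B)
    (hB : B ∈ tauIter F α) : A ∈ tauIter F α := by
  induction α using WellFoundedLT.induction generalizing A B with
  | _ α IH =>
  rcases eq_or_ne α 0 with rfl | hα
  · rw [tauIter_zero] at hB ⊢
    exact hlo A B hAB hB
  rw [mem_tauIter_of_ne_zero hα] at hB ⊢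
  intro x y hxy
  obtain ⟨β, hβ, h⟩ := hB x y hxy
  exact ⟨β, hβ, IH β hβ (inter_subset_inter (smul_set_mono hAB) (smul_set_mono hAB)) h⟩

theorem mem_tauIter_of_mem (hli : LeftInvariant F) (hlo : Lower F) {A : Set G} (hA : A ∈ F)
    {α : Ordinal} (hα : α ≠ 0) : A ∈ tauIter F α :=
  (mem_tauIter_of_ne_zero hα).2 fun x _ _ =>
    ⟨0, pos_iff_ne_zero.2 hα, by
      rw [tauIter_zero]
      exact hlo _ _ inter_subset_left (hli A hA x)⟩

theorem smul_inter_smul (T : Set G) (s t : G) : s • T ∩ t • T = s • (T ∩ (s⁻¹ * t) • T) := by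
  rw [smul_set_inter, smul_smul, mul_inv_cancel_left]

theorem mem_tauIter_iff_inter_smul (hli : LeftInvariant F) {α : Ordinal} (hα : α ≠ 0)
    {A : Set G} : A ∈ tauIter F α ↔ ∀ w : G, w ≠ 1 → ∃ β < α, A ∩ w • A ∈ tauIter F β := by
  rw [mem_tauIter_of_ne_zero hα]
  constructor
  · intro hA w hw
    obtain ⟨β, hβ, h⟩ := hA 1 w hw.symm
    exact ⟨β, hβ, by rwa [one_smul] at h⟩
  · intro hA x y hxy
    obtain ⟨β, hβ, h⟩ := hA (x⁻¹ * y) (mt inv_mul_eq_one.1 hxy)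
    exact ⟨β, hβ, by rw [smul_inter_smul]; exact smul_mem_tauIter hli h x⟩

end Iterates

section Cosets

variable {G : Type} [Group G] {K : Subgroup G}

theorem inter_smul_eq_empty {T : Set G} (hT : T ⊆ K) {s : G} (hs : s ∉ K) : T ∩ s • T = ∅ := by
  refine eq_empty_of_forall_notMem fun g ⟨hg, ⟨t, ht, hst⟩⟩ => hs ?_
  subst hst
  exact (K.mul_mem_cancel_right (hT ht)).1 (hT hg)

theorem union_smul_inter_smul_union (T : Set G) (w z : G) :
    (T ∪ z • T) ∩ w • (T ∪ z • T) =
      (T ∩ w • T ∪ T ∩ (w * z) • T) ∪ z • (T ∩ (z⁻¹ * w) • T ∪ T ∩ (z⁻¹ * w * z) • T) := by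
  simp only [smul_set_union, smul_set_inter, smul_smul, ← mul_assoc, mul_inv_cancel, one_mul]
  ext g
  simp only [mem_inter_iff, mem_union]
  tauto

variable {z : G}

theorem inv_mul_mul_eq_of_mem (hzc : ∀ x ∈ K, z * x = x * z) {w : G} (hw : w ∈ K) :
    z⁻¹ * w * z = w := by
  rw [mul_assoc, ← hzc w hw, inv_mul_cancel_left]

theorem inv_mul_mul_mem_iff (hzc : ∀ x ∈ K, z * x = x * z) {w : G} :
    z⁻¹ * w * z ∈ K ↔ w ∈ K := by
  refine ⟨fun h => ?_, fun hw => (inv_mul_mul_eq_of_mem hzc hw).symm ▸ hw⟩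
  have hconj := hzc _ h
  rw [show z * (z⁻¹ * w * z) = w * z by group, mul_left_inj] at hconj
  exact hconj ▸ h

theorem inv_mul_notMem_of_mul_mem (hzc : ∀ x ∈ K, z * x = x * z) (hz2 : z ^ 2 ∉ K) {w : G}
    (hwz : w * z ∈ K) : z⁻¹ * w ∉ K := by
  intro hzw
  have hconj : z * (z⁻¹ * w) = z⁻¹ * w * z := hzc _ hzw
  rw [mul_inv_cancel_left] at hconj
  refine hz2 ?_
  rw [show z ^ 2 = w * z * (z⁻¹ * w)⁻¹ by nth_rewrite 2 [hconj]; group]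
  exact K.mul_mem hwz (K.inv_mem hzw)

end Cosets

section Transport

variable {G : Type} [Group G] {H K : Subgroup G} (e : H ≃* K)

theorem hImg_subset (A : Set G) : hImg e A ⊆ K := by
  rintro _ ⟨k, -, rfl⟩
  exact k.2

theorem hImg_inter (A B : Set G) : hImg e (A ∩ B) = hImg e A ∩ hImg e B := by
  rw [hImg, hImg, hImg, preimage_inter, image_inter e.injective,
    image_inter Subtype.val_injective]

theorem hImg_smul (c : H) (A : Set G) : hImg e ((c : G) • A) = ((e c : K) : G) • hImg e A := by
  have hpre : Subtype.val ⁻¹' ((c : G) • A) = c • (Subtype.val ⁻¹' A : Set H) := by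
    ext h
    simp [mem_smul_set_iff_inv_smul_mem]
  rw [hImg, hpre, image_smul_distrib]
  exact image_smul_distrib K.subtype (e c) _

theorem hImg_mem_tauIter {F : Set (Set G)} (hli : LeftInvariant F) (hlo : Lower F)
    (hinv : HInv e F) {α : Ordinal} {A : Set G} (hAH : A ⊆ H) (hA : A ∈ tauIter F α) :
    hImg e A ∈ tauIter F α := by
  induction α using WellFoundedLT.induction generalizing A with
  | _ α IH =>
  rcases eq_or_ne α 0 with rfl | hα
  · rw [tauIter_zero] at hA ⊢
    exact (hinv A hAH).1 hA
  rw [mem_tauIter_iff_inter_smul hli hα] at hA ⊢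
  intro w hw1
  by_cases hw : w ∈ K
  · set c := e.symm ⟨w, hw⟩
    have hc1 : (c : G) ≠ 1 := by simpa [c] using hw1
    obtain ⟨β, hβ, hAc⟩ := hA c hc1
    have hImg_eq : hImg e (A ∩ (c : G) • A) = hImg e A ∩ w • hImg e A := by
      rw [hImg_inter, hImg_smul, e.apply_symm_apply]
    exact ⟨β, hβ, hImg_eq ▸ IH β hβ (inter_subset_left.trans hAH) hAc⟩
  · obtain ⟨β, hβ, hAw⟩ := hA w hw1
    refine ⟨β, hβ, ?_⟩
    rw [inter_smul_eq_empty (hImg_subset e A) hw]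
    exact mem_tauIter_of_subset hlo (empty_subset _) hAw

end Transport

theorem union_smul_mem_tauIter_add_one {G : Type} [Group G] {K : Subgroup G}
    {F : Set (Set G)} (hli : LeftInvariant F) (hlo : Lower F)
    (hadd : ∀ A B : Set G, A ∈ F → B ∈ F → A ∪ B ∈ F) {z : G}
    (hzc : ∀ x ∈ K, z * x = x * z) (hz2 : z ^ 2 ∉ K) {γ : Ordinal} {T : Set G}
    (hTK : T ⊆ K) (hT : T ∈ tauIter F γ) : T ∪ z • T ∈ tauIter F (γ + 1) := by
  induction γ using WellFoundedLT.induction generalizing T with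
  | _ γ IH =>
  rcases eq_or_ne γ 0 with rfl | hγ
  · rw [tauIter_zero] at hT
    exact mem_tauIter_of_mem hli hlo (hadd _ _ hT (hli T hT z)) (by simp)
  have hzK : z ∉ K := fun h => hz2 (K.pow_mem h 2)
  have hempty {s : G} (hs : s ∉ K) : T ∩ s • T = ∅ := inter_smul_eq_empty hTK hs
  rw [mem_tauIter_iff_inter_smul hli (by simp)]
  intro w hw1
  rw [union_smul_inter_smul_union]
  by_cases hw : w ∈ K
  · obtain ⟨δ, hδ, hTw⟩ := (mem_tauIter_iff_inter_smul hli hγ).1 hT w hw1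
    refine ⟨δ + 1, by simpa using hδ, ?_⟩
    rw [hempty ((K.mul_mem_cancel_left hw).not.2 hzK),
      hempty ((K.mul_mem_cancel_right hw).not.2 (K.inv_mem_iff.not.2 hzK)),
      inv_mul_mul_eq_of_mem hzc hw, union_empty, empty_union]
    exact IH δ hδ (inter_subset_left.trans hTK) hTw
  refine ⟨γ, by simp, ?_⟩
  rw [hempty hw, hempty ((inv_mul_mul_mem_iff hzc).not.2 hw), empty_union, union_empty]
  by_cases hwz : w * z ∈ K
  · rw [hempty (inv_mul_notMem_of_mul_mem hzc hz2 hwz), smul_set_empty, union_empty]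
    exact mem_tauIter_of_subset hlo inter_subset_left hT
  · rw [hempty hwz, empty_union]
    exact mem_tauIter_of_subset hlo (smul_set_mono inter_subset_left)
      (smul_mem_tauIter hli hT z)

theorem stmt_12_general {G : Type} [Group G] {H K : Subgroup G} (e : H ≃* K)
    (z : G) (hzc : ∀ x ∈ K, z * x = x * z) (hz2 : z ^ 2 ∉ K)
    (F : Set (Set G)) (hli : LeftInvariant F) (hlo : Lower F)
    (hadd : ∀ A B : Set G, A ∈ F → B ∈ F → A ∪ B ∈ F) (hinv : HInv e F)
    (α : Ordinal) (A : Set G) (hA : A ⊆ (H : Set G)) (hAα : A ∈ tauIter F α) :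
    hImg e A ∪ z • hImg e A ∈ tauIter F (α + 1) :=
  union_smul_mem_tauIter_add_one hli hlo hadd hzc hz2 (hImg_subset e A)
    (hImg_mem_tauIter e hli hlo hinv hA hAα)

theorem stmt_12 {G : Type} [Group G] {H K : Subgroup G} (hKH : K ≤ H) (e : H ≃* K)
    (z : G) (hzH : z ∈ H) (hzc : ∀ x ∈ K, z * x = x * z) (hz2 : z ^ 2 ∉ K)
    (F : Set (Set G)) (hli : LeftInvariant F) (hlo : Lower F)
    (hadd : ∀ A B : Set G, A ∈ F → B ∈ F → A ∪ B ∈ F) (hinv : HInv e F)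
    (α : Ordinal) (A : Set G) (hA : A ⊆ (H : Set G)) (hAα : A ∈ tauIter F α) :
    hImg e A ∪ z • hImg e A ∈ tauIter F (α + 1) :=
  stmt_12_general e z hzc hz2 F hli hlo hadd hinv α A hA hAα
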